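/- Consider the subset X = P ∪ Q ∪ S ∪ T of ℝ², where P = [0,1]×[0,1], Q = [0,1]×[−1,0], S = [0,1]×[−2,−1], T = [−1,0]×[−2,−1], with the induced length metric. For a = (−1/2, −2), the distance function satisfies: d_a(w) = (√5)/2 + √(w₁² + (w₂+1)²) when w₁ ≥ 0 and w₂ ≥ 2w₁ − 1, and d_a(w) = √((w₁+1/2)² + (w₂+2)²) otherwise, for all w ∈ X. -/

import Mathlib

open scoped ENNReal

/-- Intrinsic (shortest-path) distance inside a subset `X` of a Euclidean space,
as the infimum of lengths (total variations) of continuous paths in `X`. -/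
noncomputable def pathDist {E : Type*} [NormedAddCommGroup E] [InnerProductSpace ℝ E]
    (X : Set E) (x y : E) : ℝ≥0∞ :=
  ⨅ (γ : ℝ → E) (_ : ContinuousOn γ (Set.Icc 0 1)) (_ : γ 0 = x) (_ : γ 1 = y)
    (_ : ∀ t ∈ Set.Icc (0:ℝ) 1, γ t ∈ X), eVariationOn γ (Set.Icc 0 1)

/-!
Below the line through `a` and the corner `c = (0, -1)`, or in the left square, the segment from
`w` to `a` stays in `X`, so `d_a(w) = |w - a|`. Above that line every path from `w` to `a` meets the
interface `{0} × [-2, -1]`, at some `p = c - t e₂` with `t ≥ 0`. Projecting `w - p` on the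
direction of `w - c` and `p - a` on that of `c - a` gives `|w - p| + |p - a| ≥ |w - c| + |c - a|`:
the slope condition `w₁ + 1 ≥ 2 w₀` says that `w - c` makes with `e₂` an angle no larger than
`c - a` does. The broken line through `c` lies in `X` and attains this bound.
-/

open Set
open scoped RealInnerProductSpace

section Concat

variable {E : Type*}

noncomputable def concatPath (γ₁ γ₂ : ℝ → E) (t : ℝ) : E :=
  if t ≤ 1 / 2 then γ₁ (2 * t) else γ₂ (2 * t - 1)

theorem concatPath_eqOn_left (γ₁ γ₂ : ℝ → E) :
    EqOn (concatPath γ₁ γ₂) (γ₁ ∘ (2 * ·)) (Iic (1 / 2)) :=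
  fun _ ht ↦ if_pos ht

theorem concatPath_eqOn_right {γ₁ γ₂ : ℝ → E} (h : γ₁ 1 = γ₂ 0) :
    EqOn (concatPath γ₁ γ₂) (γ₂ ∘ (2 * · - 1)) (Ici (1 / 2)) := by
  intro t (ht : 1 / 2 ≤ t)
  rcases ht.eq_or_lt with rfl | ht
  · norm_num [concatPath, h]
  · exact if_neg (not_le.2 ht)

theorem mapsTo_double_Icc : MapsTo (fun t : ℝ ↦ 2 * t) (Icc 0 (1 / 2)) (Icc 0 1) :=
  fun _ ⟨h₀, h₁⟩ ↦ ⟨by linarith, by linarith⟩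

theorem mapsTo_double_sub_one_Icc : MapsTo (fun t : ℝ ↦ 2 * t - 1) (Icc (1 / 2) 1) (Icc 0 1) :=
  fun _ ⟨h₀, h₁⟩ ↦ ⟨by linarith, by linarith⟩

theorem Icc_zero_one_eq_union_halves : Icc (0:ℝ) 1 = Icc 0 (1 / 2) ∪ Icc (1 / 2) 1 := by
  rw [Icc_union_Icc_eq_Icc] <;> norm_num

variable {γ₁ γ₂ : ℝ → E}

theorem continuousOn_concatPath [TopologicalSpace E] (hc₁ : ContinuousOn γ₁ (Icc 0 1))
    (hc₂ : ContinuousOn γ₂ (Icc 0 1)) (h : γ₁ 1 = γ₂ 0) :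
    ContinuousOn (concatPath γ₁ γ₂) (Icc 0 1) := by
  rw [Icc_zero_one_eq_union_halves]
  refine ContinuousOn.union_of_isClosed ?_ ?_ isClosed_Icc isClosed_Icc
  · exact (hc₁.comp (continuous_const_mul 2).continuousOn mapsTo_double_Icc).congr
      ((concatPath_eqOn_left γ₁ γ₂).mono fun _ ht ↦ ht.2)
  · exact (hc₂.comp ((continuous_const_mul 2).sub continuous_const).continuousOn
      mapsTo_double_sub_one_Icc).congr ((concatPath_eqOn_right h).mono fun _ ht ↦ ht.1)

theorem mapsTo_concatPath {s : Set E} (h₁ : MapsTo γ₁ (Icc 0 1) s) (h₂ : MapsTo γ₂ (Icc 0 1) s)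
    (h : γ₁ 1 = γ₂ 0) : MapsTo (concatPath γ₁ γ₂) (Icc 0 1) s := by
  rw [Icc_zero_one_eq_union_halves]
  rintro t (ht | ht)
  · rw [concatPath_eqOn_left γ₁ γ₂ ht.2]; exact h₁ (mapsTo_double_Icc ht)
  · rw [concatPath_eqOn_right h ht.1]; exact h₂ (mapsTo_double_sub_one_Icc ht)

theorem eVariationOn_concatPath_le [PseudoEMetricSpace E] (h : γ₁ 1 = γ₂ 0) :
    eVariationOn (concatPath γ₁ γ₂) (Icc 0 1) ≤
      eVariationOn γ₁ (Icc 0 1) + eVariationOn γ₂ (Icc 0 1) := by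
  have hsplit := eVariationOn.Icc_add_Icc (concatPath γ₁ γ₂) (by norm_num : (0:ℝ) ≤ 1 / 2)
    (by norm_num : (1 / 2 : ℝ) ≤ 1) (mem_univ _)
  rw [univ_inter, univ_inter, univ_inter] at hsplit
  rw [← hsplit, eVariationOn.eq_of_eqOn ((concatPath_eqOn_left γ₁ γ₂).mono fun _ ht ↦ ht.2),
    eVariationOn.eq_of_eqOn ((concatPath_eqOn_right h).mono fun _ ht ↦ ht.1)]
  exact add_le_add
    (eVariationOn.comp_le_of_monotoneOn _ _ (fun _ _ _ _ h ↦ by linarith) mapsTo_double_Icc)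
    (eVariationOn.comp_le_of_monotoneOn _ _ (fun _ _ _ _ h ↦ by linarith)
      mapsTo_double_sub_one_Icc)

end Concat

section PathDist

variable {E : Type*} [NormedAddCommGroup E] [InnerProductSpace ℝ E] {X : Set E} {x y z : E}

theorem pathDist_le {γ : ℝ → E} (hγ : ContinuousOn γ (Icc 0 1)) (h₀ : γ 0 = x) (h₁ : γ 1 = y)
    (hX : ∀ t ∈ Icc (0:ℝ) 1, γ t ∈ X) : pathDist X x y ≤ eVariationOn γ (Icc 0 1) :=
  iInf_le_of_le γ <| iInf_le_of_le hγ <| iInf_le_of_le h₀ <| iInf_le_of_le h₁ <| iInf_le _ hX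

theorem le_pathDist {C : ℝ≥0∞}
    (h : ∀ γ : ℝ → E, ContinuousOn γ (Icc 0 1) → γ 0 = x → γ 1 = y →
      (∀ t ∈ Icc (0:ℝ) 1, γ t ∈ X) → C ≤ eVariationOn γ (Icc 0 1)) :
    C ≤ pathDist X x y := by
  simpa only [pathDist, le_iInf_iff] using h

theorem pathDist_le_edist_of_segment_subset (h : segment ℝ x y ⊆ X) :
    pathDist X x y ≤ edist x y := by
  have hX : ∀ t ∈ Icc (0:ℝ) 1, AffineMap.lineMap x y t ∈ X := fun t ht ↦
    h (segment_eq_image_lineMap ℝ x y ▸ mem_image_of_mem _ ht)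
  refine (pathDist_le (AffineMap.lineMap_continuous.continuousOn) (by simp) (by simp) hX).trans ?_
  calc eVariationOn (AffineMap.lineMap x y ∘ id) (Icc (0:ℝ) 1)
      ≤ nndist x y * eVariationOn id (Icc (0:ℝ) 1) :=
        (lipschitzWith_lineMap x y).lipschitzOnWith.comp_eVariationOn_le (mapsTo_univ _ _)
    _ = edist x y := by
        have hid := (monotoneOn_id (s := Icc (0:ℝ) 1)).eVariationOn_eq
          (left_mem_Icc.2 zero_le_one) (right_mem_Icc.2 zero_le_one)
        rw [inter_self] at hid
        simp [hid]

theorem pathDist_triangle (X : Set E) (x y z : E) :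
    pathDist X x z ≤ pathDist X x y + pathDist X y z := by
  simp only [pathDist, ENNReal.iInf_add, ENNReal.add_iInf, le_iInf_iff]
  intro γ₂ hc₂ h₂0 h₂1 hX₂ γ₁ hc₁ h₁0 h₁1 hX₁
  have hjoin : γ₁ 1 = γ₂ 0 := h₁1.trans h₂0.symm
  exact (pathDist_le (continuousOn_concatPath hc₁ hc₂ hjoin) (by norm_num [concatPath, h₁0])
    (by norm_num [concatPath, h₂1]) (mapsTo_concatPath hX₁ hX₂ hjoin)).trans
    (eVariationOn_concatPath_le hjoin)

theorem le_pathDist_of_sign_change {f : E → ℝ} (hf : Continuous f) (hx : 0 ≤ f x)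
    (hy : f y ≤ 0) {C : ℝ≥0∞} (hC : ∀ p ∈ X, f p = 0 → C ≤ edist x p + edist p y) :
    C ≤ pathDist X x y := by
  refine le_pathDist fun γ hγ h₀ h₁ hX ↦ ?_
  obtain ⟨τ, hτ, hfτ⟩ : ∃ τ ∈ Icc (0:ℝ) 1, f (γ τ) = 0 :=
    intermediate_value_Icc' zero_le_one (hf.comp_continuousOn hγ)
      ⟨by simpa [h₁] using hy, by simpa [h₀] using hx⟩
  have hsplit := eVariationOn.Icc_add_Icc γ hτ.1 hτ.2 (mem_univ τ)
  rw [univ_inter, univ_inter, univ_inter] at hsplit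
  calc C ≤ edist (γ 0) (γ τ) + edist (γ τ) (γ 1) := h₀ ▸ h₁ ▸ hC _ (hX τ hτ) hfτ
    _ ≤ eVariationOn γ (Icc 0 τ) + eVariationOn γ (Icc τ 1) :=
        add_le_add (eVariationOn.edist_le γ (left_mem_Icc.2 hτ.1) (right_mem_Icc.2 hτ.1))
          (eVariationOn.edist_le γ (left_mem_Icc.2 hτ.2) (right_mem_Icc.2 hτ.2))
    _ = eVariationOn γ (Icc 0 1) := hsplit

theorem edist_le_pathDist (X : Set E) (x y : E) : edist x y ≤ pathDist X x y :=
  le_pathDist_of_sign_change (f := fun _ ↦ 0) continuous_const le_rfl le_rfl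
    fun p _ _ ↦ edist_triangle x p y

end PathDist

section Refraction

variable {E : Type*} [NormedAddCommGroup E] [InnerProductSpace ℝ E]

theorem norm_add_mul_le_norm_add_smul {x e : E} {κ t : ℝ} (ht : 0 ≤ t) (hκ : κ ≤ ‖e‖)
    (hx : κ * ‖x‖ ≤ ⟪x, e⟫) : ‖x‖ + t * κ ≤ ‖x + t • e‖ := by
  rcases eq_or_ne x 0 with rfl | hx₀
  · simpa [norm_smul, abs_of_nonneg ht] using mul_le_mul_of_nonneg_left hκ ht
  have hpos : 0 < ‖x‖ := norm_pos_iff.2 hx₀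
  refine le_of_mul_le_mul_left ?_ hpos
  calc ‖x‖ * (‖x‖ + t * κ) = ‖x‖ ^ 2 + t * (κ * ‖x‖) := by ring
    _ ≤ ‖x‖ ^ 2 + t * ⟪x, e⟫ := by gcongr
    _ = ⟪x, x + t • e⟫ := by rw [inner_add_right, inner_smul_right, real_inner_self_eq_norm_sq]
    _ ≤ ‖x‖ * ‖x + t • e‖ := real_inner_le_norm _ _

theorem dist_add_dist_le_dist_add_dist_sub_smul {w c a e : E} {κ t : ℝ} (ht : 0 ≤ t)
    (hκ : |κ| ≤ ‖e‖) (hw : κ * ‖w - c‖ ≤ ⟪w - c, e⟫) (ha : ⟪c - a, e⟫ ≤ κ * ‖c - a‖) :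
    dist w c + dist c a ≤ dist w (c - t • e) + dist (c - t • e) a := by
  have hw' := norm_add_mul_le_norm_add_smul ht ((le_abs_self κ).trans hκ) hw
  have ha' := norm_add_mul_le_norm_add_smul (x := c - a) (e := -e) (κ := -κ) ht
    (by simpa using (neg_le_abs κ).trans hκ) (by simpa [inner_neg_right] using ha)
  rw [dist_eq_norm, dist_eq_norm, dist_eq_norm, dist_eq_norm]
  rw [show w - (c - t • e) = w - c + t • e by abel, show c - t • e - a = c - a + t • -e by
    rw [smul_neg]; abel]
  linarith

end Refraction

notation "ℝ²" => EuclideanSpace ℝ (Fin 2)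

theorem EuclideanSpace.dist_fin_two (x y : ℝ²) :
    dist x y = √((x 0 - y 0) ^ 2 + (x 1 - y 1) ^ 2) := by
  simp [EuclideanSpace.dist_eq, Fin.sum_univ_two, Real.dist_eq, sq_abs]

theorem EuclideanSpace.norm_fin_two (x : ℝ²) : ‖x‖ = √(x 0 ^ 2 + x 1 ^ 2) := by
  simp [EuclideanSpace.norm_eq, Fin.sum_univ_two, sq_abs]

theorem inner_zero_one (p : ℝ²) : ⟪p, !₂[0, 1]⟫ = p 1 := by
  simp [PiLp.inner_apply, Fin.sum_univ_two]

def box (x₀ x₁ y₀ y₁ : ℝ) : Set ℝ² := {p | p 0 ∈ Icc x₀ x₁ ∧ p 1 ∈ Icc y₀ y₁}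

theorem convex_box (x₀ x₁ y₀ y₁ : ℝ) : Convex ℝ (box x₀ x₁ y₀ y₁) :=
  ((convex_Icc x₀ x₁).linear_preimage (EuclideanSpace.projₗ 0)).inter
    ((convex_Icc y₀ y₁).linear_preimage (EuclideanSpace.projₗ 1))

theorem box_union_box_of_le {x₀ x₁ y₀ y₁ y₂ : ℝ} (h₀ : y₀ ≤ y₁) (h₁ : y₁ ≤ y₂) :
    box x₀ x₁ y₁ y₂ ∪ box x₀ x₁ y₀ y₁ = box x₀ x₁ y₀ y₂ := by
  ext p
  change (_ ∧ _) ∨ (_ ∧ _) ↔ _ ∧ _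
  rw [← and_or_left, or_comm, ← mem_union, Icc_union_Icc_eq_Icc h₀ h₁]

def lShape : Set ℝ² :=
  box 0 1 0 1 ∪ box 0 1 (-1) 0 ∪ box 0 1 (-2) (-1) ∪ box (-1) 0 (-2) (-1)

theorem lShape_eq : lShape = box 0 1 (-2) 1 ∪ box (-1) 0 (-2) (-1) := by
  rw [lShape, box_union_box_of_le (by norm_num) (by norm_num),
    box_union_box_of_le (by norm_num) (by norm_num)]

def lowerTriangle : Set ℝ² := {p | p 0 ≤ 1 ∧ -2 ≤ p 1 ∧ p 1 ≤ 2 * p 0 - 1}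

theorem convex_lowerTriangle : Convex ℝ lowerTriangle := by
  rintro x ⟨hx₀, hx₁, hx₂⟩ y ⟨hy₀, hy₁, hy₂⟩ s t hs ht hst
  simp only [lowerTriangle, mem_ofPred_eq, PiLp.add_apply, PiLp.smul_apply, smul_eq_mul]
  refine ⟨by nlinarith, by nlinarith, by nlinarith⟩

theorem lowerTriangle_subset_lShape : lowerTriangle ⊆ lShape := by
  rintro p ⟨h₀, h₁, h₂⟩
  rw [lShape_eq]
  rcases le_or_gt 0 (p 0) with hp | hp
  · exact Or.inl ⟨⟨hp, h₀⟩, h₁, by linarith⟩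
  · exact Or.inr ⟨⟨by linarith, hp.le⟩, h₁, by linarith⟩

noncomputable def basePoint : ℝ² := !₂[-1 / 2, -2]

def corner : ℝ² := !₂[0, -1]

theorem dist_corner (w : ℝ²) : dist w corner = √(w 0 ^ 2 + (w 1 + 1) ^ 2) := by
  simp [EuclideanSpace.dist_fin_two, corner]

theorem dist_basePoint (w : ℝ²) : dist w basePoint = √((w 0 + 1 / 2) ^ 2 + (w 1 + 2) ^ 2) := by
  norm_num [EuclideanSpace.dist_fin_two, basePoint, sub_neg_eq_add]

theorem dist_corner_basePoint : dist corner basePoint = √5 / 2 := by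
  rw [dist_basePoint, show (corner 0 + 1 / 2) ^ 2 + (corner 1 + 2) ^ 2 = 5 / 2 ^ 2 by
    norm_num [corner], Real.sqrt_div' _ (by positivity), Real.sqrt_sq zero_le_two]

theorem pathDist_lShape_basePoint_le {w : ℝ²} (hw : w ∈ lShape) (h₀ : 0 ≤ w 0) :
    pathDist lShape w basePoint ≤ ENNReal.ofReal (√5 / 2 + √(w 0 ^ 2 + (w 1 + 1) ^ 2)) := by
  have hcol : box 0 1 (-2) 1 ⊆ lShape := lShape_eq ▸ subset_union_left
  have hT : box (-1) 0 (-2) (-1) ⊆ lShape := lShape_eq ▸ subset_union_right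
  have hw' : w ∈ box 0 1 (-2) 1 := by
    rw [lShape_eq] at hw
    rcases hw with hw | ⟨⟨-, h₀'⟩, h₁, h₂⟩
    · exact hw
    · exact ⟨⟨h₀, by linarith⟩, h₁, by linarith⟩
  have hc : corner ∈ box 0 1 (-2) 1 := by norm_num [box, corner]
  have hc' : corner ∈ box (-1) 0 (-2) (-1) := by norm_num [box, corner]
  have ha : basePoint ∈ box (-1) 0 (-2) (-1) := by norm_num [box, basePoint]
  calc pathDist lShape w basePoint
      ≤ pathDist lShape w corner + pathDist lShape corner basePoint := pathDist_triangle _ _ _ _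
    _ ≤ edist w corner + edist corner basePoint := add_le_add
        (pathDist_le_edist_of_segment_subset
          (((convex_box _ _ _ _).segment_subset hw' hc).trans hcol))
        (pathDist_le_edist_of_segment_subset
          (((convex_box _ _ _ _).segment_subset hc' ha).trans hT))
    _ = _ := by
        rw [edist_dist, edist_dist, ← ENNReal.ofReal_add dist_nonneg dist_nonneg, dist_corner,
          dist_corner_basePoint, add_comm]

theorem exists_eq_corner_sub_smul {p : ℝ²} (hp : p ∈ lShape) (h : p 0 + max 0 (p 1 + 1) = 0) :
    ∃ t : ℝ, 0 ≤ t ∧ p = corner - t • !₂[0, 1] := by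
  have hmax₀ := le_max_left 0 (p 1 + 1)
  have hmax₁ := le_max_right 0 (p 1 + 1)
  have hp' : p 0 = 0 ∧ p 1 ≤ -1 := by
    rw [lShape_eq] at hp
    rcases hp with ⟨⟨hp₀, -⟩, -⟩ | ⟨-, -, hp₁⟩
    · exact ⟨by linarith, by linarith⟩
    · rw [max_eq_left (by linarith)] at h
      exact ⟨by linarith, hp₁⟩
  refine ⟨-1 - p 1, by linarith, ?_⟩
  ext i
  fin_cases i <;> simp [corner, hp'.1]

theorem le_pathDist_lShape_basePoint {w : ℝ²} (h₀ : 0 ≤ w 0) (h₁ : 2 * w 0 - 1 ≤ w 1) :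
    ENNReal.ofReal (√5 / 2 + √(w 0 ^ 2 + (w 1 + 1) ^ 2)) ≤ pathDist lShape w basePoint := by
  -- On `lShape` this function vanishes exactly on the interface `{0} × [-2, -1]` between the
  -- column and the left square.
  refine le_pathDist_of_sign_change (f := fun p : ℝ² ↦ p 0 + max 0 (p 1 + 1)) (by fun_prop)
    (by positivity) (by norm_num [basePoint]) ?_
  rintro p hp hfp
  obtain ⟨t, ht, rfl⟩ := exists_eq_corner_sub_smul hp hfp
  have h5 : 0 < √5 := by positivity
  rw [edist_dist, edist_dist, ← ENNReal.ofReal_add dist_nonneg dist_nonneg, ← dist_corner,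
    ← dist_corner_basePoint, add_comm (dist corner basePoint)]
  -- `2 / √5` is the cosine of the angle between `corner - basePoint` and the vertical.
  refine ENNReal.ofReal_le_ofReal
    (dist_add_dist_le_dist_add_dist_sub_smul (κ := 2 / √5) ht ?_ ?_ ?_)
  · rw [abs_of_pos (by positivity), EuclideanSpace.norm_fin_two, div_le_iff₀ h5]
    simpa using Real.le_sqrt_of_sq_le (by norm_num : (2:ℝ) ^ 2 ≤ 5)
  · rw [← dist_eq_norm, dist_corner, inner_zero_one, div_mul_eq_mul_div, div_le_iff₀ h5,
      show (w - corner) 1 = w 1 + 1 by simp [corner]]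
    calc 2 * √(w 0 ^ 2 + (w 1 + 1) ^ 2) = √(2 ^ 2 * (w 0 ^ 2 + (w 1 + 1) ^ 2)) := by
          rw [Real.sqrt_mul (by positivity), Real.sqrt_sq zero_le_two]
      _ ≤ √(5 * (w 1 + 1) ^ 2) := Real.sqrt_le_sqrt (by nlinarith)
      _ = (w 1 + 1) * √5 := by
          rw [Real.sqrt_mul (by positivity), Real.sqrt_sq (by linarith), mul_comm]
  · rw [← dist_eq_norm, dist_corner_basePoint, inner_zero_one]
    norm_num [corner, basePoint]

theorem segment_basePoint_subset_lShape {w : ℝ²} (hw : w ∈ lShape)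
    (h : ¬(0 ≤ w 0 ∧ 2 * w 0 - 1 ≤ w 1)) : segment ℝ w basePoint ⊆ lShape := by
  rw [lShape_eq] at hw ⊢
  rcases lt_or_ge (w 0) 0 with h₀ | h₀
  · have hwT : w ∈ box (-1) 0 (-2) (-1) := hw.resolve_left fun hc ↦ h₀.not_ge hc.1.1
    exact ((convex_box _ _ _ _).segment_subset hwT (by norm_num [box, basePoint])).trans
      subset_union_right
  · have hw' : w ∈ lowerTriangle := by
      refine ⟨?_, ?_, by linarith [not_and.1 h h₀]⟩ <;>
        rcases hw with ⟨⟨-, _⟩, _, _⟩ | ⟨⟨-, _⟩, _, _⟩ <;> linarith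
    exact (convex_lowerTriangle.segment_subset hw' (by norm_num [lowerTriangle, basePoint])).trans
      (lShape_eq ▸ lowerTriangle_subset_lShape)

theorem stmt_14 :
    let X : Set (EuclideanSpace ℝ (Fin 2)) :=
      {w | w 0 ∈ Set.Icc (0:ℝ) 1 ∧ w 1 ∈ Set.Icc (0:ℝ) 1} ∪
      {w | w 0 ∈ Set.Icc (0:ℝ) 1 ∧ w 1 ∈ Set.Icc (-1:ℝ) 0} ∪
      {w | w 0 ∈ Set.Icc (0:ℝ) 1 ∧ w 1 ∈ Set.Icc (-2:ℝ) (-1)} ∪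
      {w | w 0 ∈ Set.Icc (-1:ℝ) 0 ∧ w 1 ∈ Set.Icc (-2:ℝ) (-1)}
    let a : EuclideanSpace ℝ (Fin 2) := WithLp.toLp 2 (fun i : Fin 2 => if i = 0 then (-(1/2) : ℝ) else -2)
    ∀ w ∈ X,
      ((0 ≤ w 0 ∧ 2 * w 0 - 1 ≤ w 1) →
        pathDist X w a =
          ENNReal.ofReal (Real.sqrt 5 / 2 + Real.sqrt ((w 0) ^ 2 + (w 1 + 1) ^ 2))) ∧
      (¬(0 ≤ w 0 ∧ 2 * w 0 - 1 ≤ w 1) →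
        pathDist X w a =
          ENNReal.ofReal (Real.sqrt ((w 0 + 1/2) ^ 2 + (w 1 + 2) ^ 2))) := by
  intro X a w hw
  have hX : X = lShape := rfl
  have ha : a = basePoint := by
    ext i
    fin_cases i <;> norm_num [a, basePoint]
  rw [hX] at hw ⊢
  rw [ha]
  refine ⟨fun ⟨h₀, h₁⟩ ↦ ?_, fun h ↦ ?_⟩
  · exact le_antisymm (pathDist_lShape_basePoint_le hw h₀) (le_pathDist_lShape_basePoint h₀ h₁)
  · rw [← dist_basePoint, ← edist_dist]
    exact le_antisymm (pathDist_le_edist_of_segment_subset (segment_basePoint_subset_lShape hw h))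
      (edist_le_pathDist _ _ _)
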